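/- Define the entire function Z₂ : ℂ → ℂ by Z₂(λ) = cos(π√(λ² − 3/4)) (the value independent of the branch of the square root since cosine is even). Then Z₂ is a generating function for phase shift at Fresnel number 𝔣 = 2: Z₂ is of sine-type, its zero set is exactly {λ ∈ ℂ : λ² = k² + k + 1 for some k ∈ ℕ}, all zeros are real and simple, and each zero λ satisfies λ² = 2(l + 1/2) where l = (k² + k)/2 is an integer (k² + k being even for every integer k). -/

import Mathlib

open MeasureTheory Complex Filter
open scoped FourierTransform Real Topology

noncomputable section

structure IsSineType (Z : ℂ → ℂ) : Prop where
  entire : Differentiable ℂ Z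
  separated : ∃ c > 0, ∀ lam ∈ {z : ℂ | Z z = 0}, ∀ mu ∈ {z : ℂ | Z z = 0},
      lam ≠ mu → c ≤ ‖lam - mu‖
  bounds : ∃ A > 0, ∃ B > 0, ∃ H > 0, ∀ lam : ℂ, H ≤ |lam.im| →
      B * Real.exp (π * |lam.im|) ≤ ‖Z lam‖ ∧
      ‖Z lam‖ ≤ A * Real.exp (π * |lam.im|)

structure IsGeneratingPhase (f : ℝ) (Z : ℂ → ℂ) : Prop where
  sineType : IsSineType Z
  realZeros : ∀ z : ℂ, Z z = 0 → ∃ x : ℝ, z = (x : ℂ)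
  simpleZeros : ∀ z : ℂ, Z z = 0 → deriv Z z ≠ 0
  quantized : ∀ z : ℂ, Z z = 0 → ∃ l : ℤ, z ^ 2 = (f : ℂ) * ((l : ℂ) + 1 / 2)

/-!
Write `Z₂ λ = C (λ² - 3/4)` with `C u = cos (π √u)`. Since cosine is even, `C` does not depend on
the branch of `√u`; using `√u` on the slit plane and `I √(-u)` on its negative, `C` is holomorphic
off `0`, and `0` is a removable singularity, so `Z₂` is entire. `C u = 0` exactly when
`u = (k + 1/2)²`, i.e. `λ² = k² + k + 1`; there `u > 0`, `λ ≠ 0` and `sin (π √u) = ±1`, so the zeros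
are real and simple, and `|λ| ∈ (k + 1/2, k + 1]` separates them by `1/2`. Finally
`(√u - λ)(√u + λ) = -3/4` forces `|Im √u|` within `1` of `|Im λ|`, and the sine-type bounds follow
from `sinh |Im ζ| ≤ ‖cos ζ‖ ≤ exp |Im ζ|`.
-/

theorem Complex.sq_sqrt (u : ℂ) : sqrt u ^ 2 = u :=
  cpow_ofNat_inv_pow u 2

theorem Complex.cos_eq_cos_of_sq_eq {v w : ℂ} (h : v ^ 2 = w ^ 2) : cos v = cos w := by
  rcases sq_eq_sq_iff_eq_or_eq_neg.1 h with rfl | rfl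
  · rfl
  · exact cos_neg w

theorem Complex.sinh_abs_im_le_norm_cos (ζ : ℂ) : Real.sinh |ζ.im| ≤ ‖cos ζ‖ := by
  have h₁ : ‖exp (ζ * I)‖ = Real.exp (-ζ.im) := by simp [norm_exp]
  have h₂ : ‖exp (-ζ * I)‖ = Real.exp ζ.im := by simp [norm_exp]
  have key := abs_norm_sub_norm_le (exp (-ζ * I)) (-exp (ζ * I))
  rw [norm_neg, sub_neg_eq_add, add_comm, ← two_cos, h₁, h₂, norm_mul, Complex.norm_two] at key
  rw [← Real.abs_sinh, Real.sinh_eq, abs_div, abs_two]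
  linarith

theorem Complex.norm_cos_le_exp_abs_im (ζ : ℂ) : ‖cos ζ‖ ≤ Real.exp |ζ.im| := by
  have h₁ : ‖exp (ζ * I)‖ = Real.exp (-ζ.im) := by simp [norm_exp]
  have h₂ : ‖exp (-ζ * I)‖ = Real.exp ζ.im := by simp [norm_exp]
  have key := norm_add_le (exp (ζ * I)) (exp (-ζ * I))
  rw [← two_cos, h₁, h₂, norm_mul, Complex.norm_two] at key
  have := Real.exp_le_exp.2 (neg_le_abs ζ.im)
  have := Real.exp_le_exp.2 (le_abs_self ζ.im)
  linarith

theorem Complex.abs_abs_im_sub_abs_im_le_one {s z : ℂ} (h : ‖s ^ 2 - z ^ 2‖ ≤ 1) :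
    |(|s.im| - |z.im|)| ≤ 1 := by
  rw [sq_sub_sq, norm_mul] at h
  rcases le_or_gt ‖s + z‖ 1 with hp | hp
  · calc |(|s.im| - |z.im|)| = |(|s.im| - |-z.im|)| := by rw [abs_neg]
      _ ≤ |s.im - -z.im| := abs_abs_sub_abs_le_abs_sub _ _
      _ = |(s + z).im| := by rw [add_im, sub_neg_eq_add]
      _ ≤ 1 := (abs_im_le_norm _).trans hp
  · have hm : ‖s - z‖ ≤ 1 := by nlinarith [norm_nonneg (s - z)]
    calc |(|s.im| - |z.im|)| ≤ |s.im - z.im| := abs_abs_sub_abs_le_abs_sub _ _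
      _ = |(s - z).im| := by rw [sub_im]
      _ ≤ 1 := (abs_im_le_norm _).trans hm

theorem exists_exp_bounds_of_eq_cos_pi_mul {Z s : ℂ → ℂ} (hZ : ∀ z, Z z = cos (π * s z))
    (hs : ∀ z, |(|(s z).im| - |z.im|)| ≤ 1) :
    ∃ A > 0, ∃ B > 0, ∃ H > 0, ∀ lam : ℂ, H ≤ |lam.im| →
      B * Real.exp (π * |lam.im|) ≤ ‖Z lam‖ ∧ ‖Z lam‖ ≤ A * Real.exp (π * |lam.im|) := by
  have hB : 0 < Real.exp (-π) - Real.exp (-2 * π) :=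
    sub_pos.2 (Real.exp_lt_exp.2 (by linarith [Real.pi_pos]))
  refine ⟨Real.exp π, Real.exp_pos _, (Real.exp (-π) - Real.exp (-2 * π)) / 2, half_pos hB,
    2, two_pos, fun lam hlam => ?_⟩
  set L := |lam.im|
  obtain ⟨hlo, hhi⟩ := abs_le.1 (hs lam)
  have him : |(π * s lam).im| = π * |(s lam).im| := by
    rw [im_ofReal_mul, abs_mul, abs_of_pos Real.pi_pos]
  have hnorm_lo := sinh_abs_im_le_norm_cos (π * s lam)
  have hnorm_hi := norm_cos_le_exp_abs_im (π * s lam)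
  rw [← hZ, him] at hnorm_lo hnorm_hi
  constructor
  · calc (Real.exp (-π) - Real.exp (-2 * π)) / 2 * Real.exp (π * L)
        = (Real.exp (π * (L - 1)) - Real.exp (π * (L - 2))) / 2 := by
          rw [div_mul_eq_mul_div, sub_mul, ← Real.exp_add, ← Real.exp_add]; ring_nf
      -- `H = 2` is what makes `-(L - 1) ≤ L - 2`
      _ ≤ (Real.exp (π * (L - 1)) - Real.exp (-(π * (L - 1)))) / 2 := by
          gcongr; nlinarith [Real.pi_pos]
      _ = Real.sinh (π * (L - 1)) := (Real.sinh_eq _).symm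
      _ ≤ Real.sinh (π * |(s lam).im|) := Real.sinh_le_sinh.2 (by nlinarith [Real.pi_pos])
      _ ≤ ‖Z lam‖ := hnorm_lo
  · calc ‖Z lam‖ ≤ Real.exp (π * |(s lam).im|) := hnorm_hi
      _ ≤ Real.exp (π * (L + 1)) := Real.exp_le_exp.2 (by nlinarith [Real.pi_pos])
      _ = Real.exp π * Real.exp (π * L) := by rw [← Real.exp_add]; ring_nf

def cosSqrt (c u : ℂ) : ℂ := cos (c * sqrt u)

namespace cosSqrt

variable (c : ℂ)

theorem eq_of_sq_eq {u w : ℂ} (h : w ^ 2 = u) : cosSqrt c u = cos (c * w) :=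
  cos_eq_cos_of_sq_eq <| by rw [mul_pow, mul_pow, h, sq_sqrt]

theorem eq_cos_mul_I_mul_sqrt_neg (u : ℂ) : cosSqrt c u = cos (c * (I * sqrt (-u))) :=
  eq_of_sq_eq c <| by rw [mul_pow, I_sq, sq_sqrt]; ring

theorem hasDerivAt {u : ℂ} (hu : u ∈ slitPlane) :
    HasDerivAt (cosSqrt c) (-sin (c * sqrt u) * (c * (u ^ (-1 / 2 : ℂ) / 2))) u :=
  (hasDerivAt_cos _).comp u ((hasDerivAt_sqrt hu).const_mul c)

theorem differentiableAt_of_ne_zero {u : ℂ} (hu : u ≠ 0) : DifferentiableAt ℂ (cosSqrt c) u := by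
  rcases mem_slitPlane_or_neg_mem_slitPlane hu with hu | hu
  · exact (hasDerivAt c hu).differentiableAt
  · rw [funext (eq_cos_mul_I_mul_sqrt_neg c)]
    have := (differentiableAt_sqrt hu).comp u differentiableAt_id.neg
    fun_prop

theorem differentiable : Differentiable ℂ (cosSqrt c) := by
  intro u
  rcases ne_or_eq u 0 with hu | rfl
  · exact differentiableAt_of_ne_zero c hu
  refine (analyticAt_of_differentiable_on_punctured_nhds_of_continuousAt ?_ ?_).differentiableAt
  · filter_upwards [self_mem_nhdsWithin] with u hu using differentiableAt_of_ne_zero c hu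
  · exact continuous_cos.continuousAt.comp
      (continuousAt_const.mul (continuousAt_sqrt (Or.inl le_rfl)))

theorem deriv_ne_zero {u : ℂ} (hc : c ≠ 0) (hu : u ∈ slitPlane) (h : cosSqrt c u = 0) :
    deriv (cosSqrt c) u ≠ 0 := by
  have hsin : sin (c * sqrt u) ≠ 0 := fun hs => by
    simpa [hs, show cos (c * sqrt u) = 0 from h] using sin_sq_add_cos_sq (c * sqrt u)
  have hpow : u ^ (-1 / 2 : ℂ) ≠ 0 := by simp [cpow_eq_zero_iff, slitPlane_ne_zero hu]
  rw [(hasDerivAt c hu).deriv]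
  simp [hsin, hc, hpow]

theorem pi_eq_zero_iff {u : ℂ} : cosSqrt π u = 0 ↔ ∃ k : ℕ, u = (k + 1 / 2) ^ 2 := by
  constructor
  · intro h
    obtain ⟨m, hm⟩ := cos_eq_zero_iff.1 h
    have hsqrt : sqrt u = m + 1 / 2 := by
      refine mul_left_cancel₀ (ofReal_ne_zero.2 Real.pi_ne_zero) ?_
      rw [hm]; ring
    have hu : u = (m + 1 / 2) ^ 2 := by rw [← hsqrt, sq_sqrt]
    obtain ⟨k, rfl | rfl⟩ : ∃ k : ℕ, m = k ∨ m = -(k : ℤ) - 1 := by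
      rcases le_or_gt 0 m with hm | hm
      exacts [⟨m.toNat, .inl (by omega)⟩, ⟨(-m - 1).toNat, .inr (by omega)⟩]
    · exact ⟨k, by rw [hu]; push_cast; ring⟩
    · exact ⟨k, by rw [hu]; push_cast; ring⟩
  · rintro ⟨k, rfl⟩
    rw [eq_of_sq_eq π rfl, cos_eq_zero_iff]
    exact ⟨k, by push_cast; ring⟩

end cosSqrt

theorem lt_abs_and_abs_le_of_sq_eq {x : ℝ} {k : ℕ} (h : x ^ 2 = k ^ 2 + k + 1) :
    k + 1 / 2 < |x| ∧ |x| ≤ k + 1 := by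
  have hsq : |x| ^ 2 = k ^ 2 + k + 1 := by rw [sq_abs, h]
  have hk : (0 : ℝ) ≤ k := k.cast_nonneg
  constructor <;> nlinarith [abs_nonneg x]

theorem half_le_abs_sub_of_sq_eq {x y : ℝ} {k j : ℕ} (hx : x ^ 2 = k ^ 2 + k + 1)
    (hy : y ^ 2 = j ^ 2 + j + 1) (hne : x ≠ y) : 1 / 2 ≤ |x - y| := by
  obtain ⟨hx₁, hx₂⟩ := lt_abs_and_abs_le_of_sq_eq hx
  obtain ⟨hy₁, hy₂⟩ := lt_abs_and_abs_le_of_sq_eq hy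
  rcases eq_or_ne k j with rfl | hkj
  · have hxy : x = -y := by
      rcases sq_eq_sq_iff_eq_or_eq_neg.1 (hx.trans hy.symm) with h | h
      exacts [absurd h hne, h]
    rw [hxy, abs_sub_comm, sub_neg_eq_add, ← two_mul, abs_mul, abs_two]
    linarith [abs_nonneg y]
  · have hkj' : (k : ℝ) + 1 ≤ j ∨ (j : ℝ) + 1 ≤ k := by
      rcases Nat.lt_or_gt_of_ne hkj with h | h
      exacts [.inl (by exact_mod_cast h), .inr (by exact_mod_cast h)]
    have hxy := abs_sub_abs_le_abs_sub x y
    have hyx := abs_sub_abs_le_abs_sub y x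
    rw [abs_sub_comm y x] at hyx
    rcases hkj' with h | h <;> linarith

def fresnelTwoGenerator (z : ℂ) : ℂ := cosSqrt π (z ^ 2 - 3 / 4)

namespace fresnelTwoGenerator

theorem eq_zero_iff {z : ℂ} : fresnelTwoGenerator z = 0 ↔ ∃ k : ℕ, z ^ 2 = k ^ 2 + k + 1 := by
  rw [fresnelTwoGenerator, cosSqrt.pi_eq_zero_iff]
  exact exists_congr fun k => by constructor <;> intro h <;> linear_combination h

theorem exists_ofReal_of_eq_zero {z : ℂ} (hz : fresnelTwoGenerator z = 0) :
    ∃ x : ℝ, z = x ∧ ∃ k : ℕ, x ^ 2 = k ^ 2 + k + 1 := by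
  obtain ⟨k, hk⟩ := eq_zero_iff.1 hz
  set r := √((k : ℝ) ^ 2 + k + 1)
  have hr : r ^ 2 = (k : ℝ) ^ 2 + k + 1 := Real.sq_sqrt (by positivity)
  have hzr : z ^ 2 = (r : ℂ) ^ 2 := by rw [hk]; exact_mod_cast hr.symm
  rcases sq_eq_sq_iff_eq_or_eq_neg.1 hzr with h | h
  · exact ⟨r, h, k, hr⟩
  · exact ⟨-r, by rw [h, ofReal_neg], k, by rw [neg_sq, hr]⟩

theorem differentiable : Differentiable ℂ fresnelTwoGenerator :=
  (cosSqrt.differentiable _).comp (by fun_prop)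

theorem deriv_ne_zero {z : ℂ} (hz : fresnelTwoGenerator z = 0) :
    deriv fresnelTwoGenerator z ≠ 0 := by
  obtain ⟨k, hk⟩ := eq_zero_iff.1 hz
  have hu : z ^ 2 - 3 / 4 = (((k + 1 / 2) ^ 2 : ℝ) : ℂ) := by rw [hk]; push_cast; ring
  have hslit : z ^ 2 - 3 / 4 ∈ slitPlane := by rw [hu]; exact ofReal_mem_slitPlane.2 (by positivity)
  have hz0 : z ≠ 0 := by
    rintro rfl
    have : (0 : ℝ) = k ^ 2 + k + 1 := by exact_mod_cast (zero_pow two_ne_zero).symm.trans hk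
    linarith [sq_nonneg (k : ℝ), k.cast_nonneg (α := ℝ)]
  have hderiv : HasDerivAt fresnelTwoGenerator
      (deriv (cosSqrt π) (z ^ 2 - 3 / 4) * (2 * z)) z := by
    have hpoly : HasDerivAt (fun w => w ^ 2 - 3 / 4) (2 * z) z := by
      simpa using (hasDerivAt_pow 2 z).sub_const (3 / 4 : ℂ)
    exact (cosSqrt.differentiable π _).hasDerivAt.comp z hpoly
  rw [hderiv.deriv]
  exact mul_ne_zero (cosSqrt.deriv_ne_zero π (ofReal_ne_zero.2 Real.pi_ne_zero) hslit hz)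
    (mul_ne_zero two_ne_zero hz0)

theorem exists_exp_bounds :
    ∃ A > 0, ∃ B > 0, ∃ H > 0, ∀ lam : ℂ, H ≤ |lam.im| →
      B * Real.exp (π * |lam.im|) ≤ ‖fresnelTwoGenerator lam‖ ∧
      ‖fresnelTwoGenerator lam‖ ≤ A * Real.exp (π * |lam.im|) := by
  refine exists_exp_bounds_of_eq_cos_pi_mul (s := fun z => sqrt (z ^ 2 - 3 / 4))
    (fun _ => rfl) fun z => abs_abs_im_sub_abs_im_le_one ?_
  rw [sq_sqrt, sub_sub_cancel_left, norm_neg]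
  norm_num

theorem isSineType : IsSineType fresnelTwoGenerator where
  entire := differentiable
  separated := by
    refine ⟨1 / 2, one_half_pos, fun lam hlam mu hmu hne => ?_⟩
    obtain ⟨x, rfl, k, hk⟩ := exists_ofReal_of_eq_zero hlam
    obtain ⟨y, rfl, j, hj⟩ := exists_ofReal_of_eq_zero hmu
    rw [← ofReal_sub, norm_real, Real.norm_eq_abs]
    exact half_le_abs_sub_of_sq_eq hk hj fun h => hne (by rw [h])
  bounds := exists_exp_bounds

theorem exists_sq_eq_two_mul_add_half {z : ℂ} (hz : fresnelTwoGenerator z = 0) :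
    ∃ k : ℕ, ∃ l : ℤ, 2 * l = (k : ℤ) ^ 2 + k ∧ z ^ 2 = 2 * ((l : ℂ) + 1 / 2) := by
  obtain ⟨k, hk⟩ := eq_zero_iff.1 hz
  obtain ⟨l, hl⟩ := Int.even_mul_succ_self (k : ℤ)
  have hl' : 2 * l = (k : ℤ) ^ 2 + k := by linear_combination -hl
  refine ⟨k, l, hl', ?_⟩
  have : 2 * (l : ℂ) = k ^ 2 + k := by exact_mod_cast hl'
  linear_combination hk - this

theorem isGeneratingPhase : IsGeneratingPhase 2 fresnelTwoGenerator where
  sineType := isSineType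
  realZeros _ hz := (exists_ofReal_of_eq_zero hz).imp fun _ => And.left
  simpleZeros _ := deriv_ne_zero
  quantized z hz := by
    obtain ⟨-, l, -, h⟩ := exists_sq_eq_two_mul_add_half hz
    exact ⟨l, by exact_mod_cast h⟩

end fresnelTwoGenerator

/-- `Z₂(λ) = cos(π√(λ² - 3/4))` is a generating function for phase shift at Fresnel
number `𝔣 = 2`. -/
theorem generating_function_fresnel_two
    (Z₂ : ℂ → ℂ)
    (hZ₂ : ∀ z : ℂ, Z₂ z = Complex.cos ((π : ℂ) * (z ^ 2 - 3 / 4) ^ ((1 : ℂ) / 2))) :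
    -- the value is independent of the branch of the square root
    (∀ z w : ℂ, w ^ 2 = z ^ 2 - 3 / 4 → Z₂ z = Complex.cos ((π : ℂ) * w)) ∧
    -- Z₂ is a generating function for phase shift at 𝔣 = 2
    IsGeneratingPhase 2 Z₂ ∧
    -- the zero set is exactly {λ : λ² = k² + k + 1 for some k ∈ ℕ}
    {z : ℂ | Z₂ z = 0} = {z : ℂ | ∃ k : ℕ, z ^ 2 = (k : ℂ) ^ 2 + k + 1} ∧
    -- each zero satisfies λ² = 2(l + 1/2) with l = (k² + k)/2 an integer
    (∀ z : ℂ, Z₂ z = 0 → ∃ k : ℕ, ∃ l : ℤ,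
      2 * (l : ℤ) = (k : ℤ) ^ 2 + k ∧ z ^ 2 = 2 * ((l : ℂ) + 1 / 2)) := by
  obtain rfl : Z₂ = fresnelTwoGenerator := funext fun z => by rw [hZ₂, one_div]; rfl
  exact ⟨fun z w hw => cosSqrt.eq_of_sq_eq π hw, fresnelTwoGenerator.isGeneratingPhase,
    Set.ext fun _ => fresnelTwoGenerator.eq_zero_iff,
    fun _ => fresnelTwoGenerator.exists_sq_eq_two_mul_add_half⟩

end
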